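/- arXiv:1805.00962 — 5 statements merged into one kernel-verified Lean document; each statement's English description precedes it below -/
import Mathlib

section
/- Let k > 0, c > 1, C ≥ 0, S ≥ 0, and let b, g : ℕ → ℝ be nonnegative sequences satisfying (1 + k)·b(n) ≤ b(n−1) + k·C·(1 + c·k)^{−n}·(1 + g(n)) for all n ≥ 1, and k·∑_{m=1}^{n} g(m) ≤ S for all n ≥ 1. Then b(n) ≤ (b(0) + C/(c−1) + C·S) · (1 + k)^{−n} for all n ≥ 0. -/
/-!
Multiplying the recursion by `(1 + k) ^ (n - 1)` and writing `r = (1 + k) / (1 + c k) < 1`, the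
constant part of the source term becomes `C / (c - 1) * (r ^ (n - 1) - r ^ n)`, a telescoping
difference, while the `g`-part is at most `C k g(n)`. Hence
`(1 + k) ^ n b(n) + C / (c - 1) * r ^ n - C k ∑_{m ≤ n} g(m)` is nonincreasing in `n`.
-/

open Finset

lemma div_pow_sub_div_pow_succ {K : Type*} [Field K] {a d : K} (hd : d ≠ 0) (n : ℕ) :
    (a / d) ^ n - (a / d) ^ (n + 1) = (d - a) * a ^ n / d ^ (n + 1) := by
  rw [div_pow, div_pow, pow_succ a, pow_succ d]
  field_simp

section
variable {k c : ℝ}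

lemma one_add_pow_div_one_add_mul_pow_succ_le_one (hk : 0 ≤ k) (hc : 1 ≤ c) (n : ℕ) :
    (1 + k) ^ n / (1 + c * k) ^ (n + 1) ≤ 1 := by
  have hkck : 1 + k ≤ 1 + c * k := by nlinarith
  rw [div_le_one (by positivity)]
  calc (1 + k) ^ n ≤ (1 + c * k) ^ n := pow_le_pow_left₀ (by positivity) hkck n
    _ ≤ (1 + c * k) ^ (n + 1) := pow_le_pow_right₀ (by linarith) n.le_succ

lemma one_add_pow_mul_source_le (hk : 0 ≤ k) (hc : 1 < c) {C x : ℝ} (hC : 0 ≤ C)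
    (hx : 0 ≤ x) (n : ℕ) :
    (1 + k) ^ n * (k * C * ((1 + c * k) ^ (n + 1))⁻¹ * (1 + x))
      ≤ C / (c - 1) * (((1 + k) / (1 + c * k)) ^ n - ((1 + k) / (1 + c * k)) ^ (n + 1))
        + C * (k * x) := by
  have hck : 0 < 1 + c * k := by nlinarith
  have hw := one_add_pow_div_one_add_mul_pow_succ_le_one hk hc.le n
  have hgeom : C / (c - 1) * (((1 + k) / (1 + c * k)) ^ n - ((1 + k) / (1 + c * k)) ^ (n + 1))
      = C * (k * (1 + k) ^ n / (1 + c * k) ^ (n + 1)) := by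
    rw [div_pow_sub_div_pow_succ hck.ne']
    field_simp [(sub_pos.2 hc).ne']
    ring
  rw [hgeom]
  calc (1 + k) ^ n * (k * C * ((1 + c * k) ^ (n + 1))⁻¹ * (1 + x))
      = C * (k * (1 + k) ^ n / (1 + c * k) ^ (n + 1))
        + (1 + k) ^ n / (1 + c * k) ^ (n + 1) * (C * (k * x)) := by ring
    _ ≤ C * (k * (1 + k) ^ n / (1 + c * k) ^ (n + 1)) + 1 * (C * (k * x)) := by
      gcongr
    _ = _ := by ring

end

theorem stmt_8_general (k c C S : ℝ) (hk : 0 < k) (hc : 1 < c) (hC : 0 ≤ C)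
    (b g : ℕ → ℝ)
    (hgnn : ∀ n : ℕ, 0 ≤ g n)
    (hrec : ∀ n : ℕ, 1 ≤ n →
      (1 + k) * b n ≤ b (n - 1) + k * C * ((1 + c * k) ^ n)⁻¹ * (1 + g n))
    (hsum : ∀ n : ℕ, 1 ≤ n → k * ∑ m ∈ Finset.Icc 1 n, g m ≤ S) :
    ∀ n : ℕ, b n ≤ (b 0 + C / (c - 1) + C * S) * ((1 + k) ^ n)⁻¹ := by
  set r := (1 + k) / (1 + c * k)
  set G : ℕ → ℝ := fun n ↦ k * ∑ m ∈ Icc 1 n, g m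
  have hGS : ∀ n, G n ≤ S := fun n ↦
    (mul_le_mul_of_nonneg_left (sum_le_sum_of_subset_of_nonneg
      (Icc_subset_Icc_right n.le_succ) fun m _ _ ↦ hgnn m) hk.le).trans
      (hsum (n + 1) n.succ_pos)
  have hL : Antitone fun n ↦ (1 + k) ^ n * b n + C / (c - 1) * r ^ n - C * G n := by
    refine antitone_nat_of_succ_le fun n ↦ ?_
    have hstep := mul_le_mul_of_nonneg_left (hrec (n + 1) n.succ_pos)
      (by positivity : 0 ≤ (1 + k) ^ n)
    have hsource := one_add_pow_mul_source_le hk.le hc hC (hgnn (n + 1)) n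
    simp only [G, sum_Icc_succ_top (Nat.le_add_left 1 n), Nat.add_sub_cancel] at hstep ⊢
    linarith [show (1 + k) ^ (n + 1) * b (n + 1) = (1 + k) ^ n * ((1 + k) * b (n + 1)) by ring]
  intro n
  have hr : 0 ≤ r := div_nonneg (by linarith) (by nlinarith)
  have hCc : 0 ≤ C / (c - 1) * r ^ n := mul_nonneg (div_nonneg hC (by linarith)) (pow_nonneg hr n)
  have hL0 : (1 + k) ^ n * b n + C / (c - 1) * r ^ n - C * G n ≤ b 0 + C / (c - 1) := by
    simpa [G] using hL n.zero_le
  rw [le_mul_inv_iff₀ (by positivity), mul_comm]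
  linarith [mul_le_mul_of_nonneg_left (hGS n) hC]

/-- Case `2K_p > 1` (estimate (Newv3)): geometric decay of `b(n)` with rate `(1+k)^{−n}`. -/
theorem stmt_8 (k c C S : ℝ) (hk : 0 < k) (hc : 1 < c) (hC : 0 ≤ C) (hS : 0 ≤ S)
    (b g : ℕ → ℝ)
    (hbnn : ∀ n : ℕ, 0 ≤ b n) (hgnn : ∀ n : ℕ, 0 ≤ g n)
    (hrec : ∀ n : ℕ, 1 ≤ n →
      (1 + k) * b n ≤ b (n - 1) + k * C * ((1 + c * k) ^ n)⁻¹ * (1 + g n))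
    (hsum : ∀ n : ℕ, 1 ≤ n → k * ∑ m ∈ Finset.Icc 1 n, g m ≤ S) :
    ∀ n : ℕ, b n ≤ (b 0 + C / (c - 1) + C * S) * ((1 + k) ^ n)⁻¹ :=
  stmt_8_general k c C S hk hc hC b g hgnn hrec hsum
end

section
/- Let k > 0, C ≥ 0, S ≥ 0, and let b, g : ℕ → ℝ be nonnegative sequences satisfying (1 + k)·b(n) ≤ b(n−1) + k·C·(1 + k)^{−n}·(1 + g(n)) for all n ≥ 1, and k·∑_{m=1}^{n} g(m) ≤ S for all n ≥ 1. Then b(n) ≤ (b(0) + C·k·n + C·S) · (1 + k)^{−n} for all n ≥ 0. -/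
/-! Multiplying by `(1 + k) ^ n` turns the recursion into
`a (n + 1) ≤ a n + k C (1 + g (n + 1))` for `a n = (1 + k) ^ n b n`, which telescopes;
the sum of the `g`-terms is controlled by `S`. -/

open Finset

theorem le_add_sum_Icc_of_le_add {α : Type*} [AddCommMonoid α] [PartialOrder α]
    [IsOrderedAddMonoid α] {a d : ℕ → α} (h : ∀ n, a (n + 1) ≤ a n + d (n + 1)) (n : ℕ) :
    a n ≤ a 0 + ∑ m ∈ Icc 1 n, d m := by
  induction n with
  | zero => simp
  | succ n ih =>
    rw [sum_Icc_succ_top (Nat.le_add_left 1 n), ← add_assoc]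
    exact (h n).trans (add_le_add_left ih _)

theorem pow_succ_mul_le_pow_mul_add {q x y c : ℝ} (hq : 1 ≤ q) (hc : 0 ≤ c) (n : ℕ)
    (h : q * x ≤ y + c * (q ^ (n + 1))⁻¹) : q ^ (n + 1) * x ≤ q ^ n * y + c := by
  have hqn : 0 < q ^ n := by positivity
  have hcq : q ^ n * (c * (q ^ (n + 1))⁻¹) ≤ c := by
    have hq0 : q ≠ 0 := by positivity
    calc q ^ n * (c * (q ^ (n + 1))⁻¹) = c / q := by field_simp; ring
      _ ≤ c := div_le_self hc hq
  calc q ^ (n + 1) * x = q ^ n * (q * x) := by ring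
    _ ≤ q ^ n * (y + c * (q ^ (n + 1))⁻¹) := mul_le_mul_of_nonneg_left h hqn.le
    _ ≤ q ^ n * y + c := by rw [mul_add]; linarith

theorem sum_Icc_mul_one_add {R : Type*} [CommSemiring R] (c : R) (g : ℕ → R) (n : ℕ) :
    ∑ m ∈ Icc 1 n, c * (1 + g m) = c * n + c * ∑ m ∈ Icc 1 n, g m := by
  simp [← mul_sum, sum_add_distrib, mul_add, mul_comm]

theorem stmt_9_general (k C S : ℝ) (hk : 0 < k) (hC : 0 ≤ C) (hS : 0 ≤ S)
    (b g : ℕ → ℝ)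
    (hgnn : ∀ n : ℕ, 0 ≤ g n)
    (hrec : ∀ n : ℕ, 1 ≤ n →
      (1 + k) * b n ≤ b (n - 1) + k * C * ((1 + k) ^ n)⁻¹ * (1 + g n))
    (hsum : ∀ n : ℕ, 1 ≤ n → k * ∑ m ∈ Finset.Icc 1 n, g m ≤ S) :
    ∀ n : ℕ, b n ≤ (b 0 + C * k * n + C * S) * ((1 + k) ^ n)⁻¹ := by
  intro n
  have hstep (m : ℕ) :
      (1 + k) ^ (m + 1) * b (m + 1) ≤ (1 + k) ^ m * b m + k * C * (1 + g (m + 1)) :=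
    pow_succ_mul_le_pow_mul_add (by linarith) (by have := hgnn (m + 1); positivity) m
      (by simpa [mul_right_comm] using hrec (m + 1) (Nat.le_add_left 1 m))
  have hgsum : C * (k * ∑ m ∈ Icc 1 n, g m) ≤ C * S := by
    rcases Nat.eq_zero_or_pos n with rfl | hn
    · simpa using mul_nonneg hC hS
    · exact mul_le_mul_of_nonneg_left (hsum n hn) hC
  have hweighted := le_add_sum_Icc_of_le_add (a := fun m ↦ (1 + k) ^ m * b m)
    (d := fun m ↦ k * C * (1 + g m)) hstep n
  rw [le_mul_inv_iff₀ (by positivity), mul_comm]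
  simp only [pow_zero, one_mul, sum_Icc_mul_one_add] at hweighted
  linarith

/-- Case `2K_p = 1` (estimate (Newv2)): decay of `b(n)` with rate `kn·(1+k)^{−n}`. -/
theorem stmt_9 (k C S : ℝ) (hk : 0 < k) (hC : 0 ≤ C) (hS : 0 ≤ S)
    (b g : ℕ → ℝ)
    (hbnn : ∀ n : ℕ, 0 ≤ b n) (hgnn : ∀ n : ℕ, 0 ≤ g n)
    (hrec : ∀ n : ℕ, 1 ≤ n →
      (1 + k) * b n ≤ b (n - 1) + k * C * ((1 + k) ^ n)⁻¹ * (1 + g n))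
    (hsum : ∀ n : ℕ, 1 ≤ n → k * ∑ m ∈ Finset.Icc 1 n, g m ≤ S) :
    ∀ n : ℕ, b n ≤ (b 0 + C * k * n + C * S) * ((1 + k) ^ n)⁻¹ :=
  stmt_9_general k C S hk hC hS b g hgnn hrec hsum
end

section
/- Let k > 0, 0 < c < 1, C ≥ 0, S ≥ 0, and let b, g : ℕ → ℝ be nonnegative sequences satisfying (1 + k)·b(n) ≤ b(n−1) + k·C·(1 + c·k)^{−n}·(1 + g(n)) for all n ≥ 1, and k·∑_{m=1}^{n} g(m) ≤ S for all n ≥ 1. Then b(n) ≤ (b(0) + C/(1−c) + C·S) · (1 + c·k)^{−n} for all n ≥ 0. -/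
/-- Case `2K_p < 1` (estimate (Newv4)): geometric decay of `b(n)` with rate `(1+ck)^{−n}`. -/
theorem stmt_10 (k c C S : ℝ) (hk : 0 < k) (hc0 : 0 < c) (hc1 : c < 1)
    (hC : 0 ≤ C) (hS : 0 ≤ S)
    (b g : ℕ → ℝ)
    (hbnn : ∀ n : ℕ, 0 ≤ b n) (hgnn : ∀ n : ℕ, 0 ≤ g n)
    (hrec : ∀ n : ℕ, 1 ≤ n →
      (1 + k) * b n ≤ b (n - 1) + k * C * ((1 + c * k) ^ n)⁻¹ * (1 + g n))
    (hsum : ∀ n : ℕ, 1 ≤ n → k * ∑ m ∈ Finset.Icc 1 n, g m ≤ S) :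
    ∀ n : ℕ, b n ≤ (b 0 + C / (1 - c) + C * S) * ((1 + c * k) ^ n)⁻¹ := by
  set a := 1 + c * k with ha
  have hk1 : (0:ℝ) < 1 + k := by linarith
  have ha1 : 1 < a := by nlinarith
  have ha0 : 0 < a := by linarith
  have hale : a ≤ 1 + k := by nlinarith
  have h1c : (0:ℝ) < 1 - c := by linarith
  set D := C / (1 - c) with hD
  set T := k * C / (1 + k) with hT
  have hDnn : 0 ≤ D := div_nonneg hC h1c.le
  have hTnn : 0 ≤ T := div_nonneg (by positivity) hk1.le
  have hDC : D * (1 - c) = C := by rw [hD]; field_simp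
  have hTC : T * (1 + k) = k * C := by rw [hT]; field_simp
  have key : ∀ n : ℕ, a ^ n * b n ≤ b 0 + D + T * ∑ m ∈ Finset.Icc 1 n, g m := by
    intro n
    induction n with
    | zero => simp; linarith [hbnn 0]
    | succ n ih =>
      have hr := hrec (n + 1) (by omega)
      simp only [Nat.add_sub_cancel] at hr
      have hpow : 0 < a ^ (n + 1) := pow_pos ha0 _
      have hcancel : a ^ (n + 1) * (a ^ (n + 1))⁻¹ = 1 := mul_inv_cancel₀ hpow.ne'
      have h2 : (1 + k) * (a ^ (n + 1) * b (n + 1)) ≤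
          a * (a ^ n * b n) + k * C * (1 + g (n + 1)) := by
        calc (1 + k) * (a ^ (n + 1) * b (n + 1))
            = a ^ (n + 1) * ((1 + k) * b (n + 1)) := by ring
          _ ≤ a ^ (n + 1) * (b n + k * C * (a ^ (n + 1))⁻¹ * (1 + g (n + 1))) :=
              mul_le_mul_of_nonneg_left hr hpow.le
          _ = a * (a ^ n * b n)
              + (a ^ (n + 1) * (a ^ (n + 1))⁻¹) * (k * C * (1 + g (n + 1))) := by ring
          _ = a * (a ^ n * b n) + k * C * (1 + g (n + 1)) := by rw [hcancel]; ring
      rw [Finset.sum_Icc_succ_top (by omega : 1 ≤ n + 1)]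
      have hsnn : 0 ≤ ∑ m ∈ Finset.Icc 1 n, g m :=
        Finset.sum_nonneg fun m _ => hgnn m
      have hgn : 0 ≤ g (n + 1) := hgnn (n + 1)
      have hBnn : 0 ≤ a ^ n * b n := mul_nonneg (pow_pos ha0 n).le (hbnn n)
      have hmain : (1 + k) * (a ^ (n + 1) * b (n + 1)) ≤
          (1 + k) * (b 0 + D + T * (∑ m ∈ Finset.Icc 1 n, g m + g (n + 1))) := by
        have h3 : a * (a ^ n * b n) ≤
            a * (b 0 + D + T * ∑ m ∈ Finset.Icc 1 n, g m) :=
          mul_le_mul_of_nonneg_left ih ha0.le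
        nlinarith [hbnn 0, mul_nonneg hTnn hsnn, mul_nonneg hC hgn,
          mul_nonneg (mul_nonneg hk.le hC) hgn]
      exact le_of_mul_le_mul_left hmain hk1
  intro n
  have hpn : 0 < a ^ n := pow_pos ha0 n
  have hfin : a ^ n * b n ≤ b 0 + D + C * S := by
    rcases Nat.eq_zero_or_pos n with hn | hn
    · subst hn
      have := key 0
      simp at this
      nlinarith [mul_nonneg hC hS]
    · have h1 := key n
      have h2 := hsum n hn
      have hsnn : 0 ≤ ∑ m ∈ Finset.Icc 1 n, g m :=
        Finset.sum_nonneg fun m _ => hgnn m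
      -- T * Σ ≤ C * S
      have h3 : T * ∑ m ∈ Finset.Icc 1 n, g m ≤ C * S := by
        have : T * ∑ m ∈ Finset.Icc 1 n, g m
            = (C / (1 + k)) * (k * ∑ m ∈ Finset.Icc 1 n, g m) := by
          rw [hT]; ring
        rw [this]
        have hCk : 0 ≤ C / (1 + k) := div_nonneg hC hk1.le
        calc (C / (1 + k)) * (k * ∑ m ∈ Finset.Icc 1 n, g m)
            ≤ (C / (1 + k)) * S := mul_le_mul_of_nonneg_left h2 hCk
          _ ≤ C * S := by
              apply mul_le_mul_of_nonneg_right _ hS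
              rw [div_le_iff₀ hk1]; nlinarith
      linarith
  calc b n = (a ^ n)⁻¹ * (a ^ n * b n) := by
        field_simp
    _ ≤ (a ^ n)⁻¹ * (b 0 + D + C * S) :=
        mul_le_mul_of_nonneg_left hfin (inv_nonneg.mpr hpn.le)
    _ = (b 0 + D + C * S) * (a ^ n)⁻¹ := by ring
end

section
/- Let k > 0, c > 0, C ≥ 0, S ≥ 0, and let b, g : ℕ → ℝ be nonnegative sequences satisfying (1 + k)·b(n) ≤ b(n−1) + k·C·(1 + c·k)^{−n}·(1 + g(n)) for all n ≥ 1, and k·∑_{m=1}^{n} g(m) ≤ S for all n ≥ 1. Then for all n ≥ 0: if c > 1 then b(n) ≤ (b(0) + C/(c−1) + C·S)·exp(−k·n/(1+k)); if c = 1 then b(n) ≤ (b(0) + C·k·n + C·S)·exp(−k·n/(1+k)); if c < 1 then b(n) ≤ (b(0) + C/(1−c) + C·S)·exp(−c·k·n/(1+c·k)). -/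
open Finset Real

/-!
Put `λ = k` if `c ≥ 1` and `λ = c k` if `c < 1`, and `a n = (1 + λ) ^ n * b n`. Dividing the
recursion by `1 + k` gives `a n ≤ r a (n - 1) + k C / (1 + k) * q ^ n * (1 + g n)` with
`r = (1 + λ) / (1 + k) ≤ 1` and `q = (1 + λ) / (1 + c k) ≤ 1`. For `c ≥ 1` we have `r = 1` and the
forcing is summed directly: a geometric series of ratio `q < 1` when `c > 1`, `n` equal terms when
`c = 1`. For `c < 1` we have `q = 1` and the contraction `r` absorbs the constant forcing, as
`(1 - r) * C / (1 - c) = k C / (1 + k)`. The `g`-part contributes at most `C S` in every case.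
Finally `(1 + λ) ^ (-n) ≤ exp (-λ n / (1 + λ))` because `λ / (1 + λ) ≤ log (1 + λ)`.
-/

theorem exp_mul_div_one_add_le_one_add_pow {x : ℝ} (hx : -1 < x) (n : ℕ) :
    exp (x * n / (1 + x)) ≤ (1 + x) ^ n := by
  have hx' : 0 < 1 + x := by linarith
  have hlog : x / (1 + x) ≤ log (1 + x) := by
    convert one_sub_inv_le_log_of_pos hx' using 1
    field_simp; ring
  calc exp (x * n / (1 + x)) = exp (x / (1 + x)) ^ n := by
        rw [← exp_nat_mul]; ring_nf
    _ ≤ exp (log (1 + x)) ^ n := by gcongr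
    _ = (1 + x) ^ n := by rw [exp_log hx']

theorem le_mul_exp_of_one_add_pow_mul_le {x b K : ℝ} {n : ℕ} (hx : -1 < x) (hb : 0 ≤ b)
    (h : (1 + x) ^ n * b ≤ K) : b ≤ K * exp (-(x * n) / (1 + x)) := by
  rw [neg_div, exp_neg, le_mul_inv_iff₀ (exp_pos _)]
  calc b * exp (x * n / (1 + x)) ≤ b * (1 + x) ^ n := by
        gcongr; exact exp_mul_div_one_add_le_one_add_pow hx n
    _ ≤ K := by linarith

theorem le_add_sum_of_le_mul_add {a h : ℕ → ℝ} {r e K : ℝ} (hr₀ : 0 ≤ r) (hr₁ : r ≤ 1)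
    (hh : ∀ n, 0 ≤ h n) (ha₀ : a 0 ≤ K) (he : e ≤ (1 - r) * K)
    (ha : ∀ n, a (n + 1) ≤ r * a n + e + h (n + 1)) (n : ℕ) :
    a n ≤ K + ∑ m ∈ Icc 1 n, h m := by
  induction n with
  | zero => simpa using ha₀
  | succ n ih =>
    have hsum : 0 ≤ ∑ m ∈ Icc 1 n, h m := sum_nonneg fun m _ => hh m
    rw [sum_Icc_succ_top (by omega)]
    nlinarith [ha n, mul_le_mul_of_nonneg_left ih hr₀]

theorem one_add_pow_succ_mul_le {k c C x y z G : ℝ} {n : ℕ} (hk : 0 < k) (hx : 0 ≤ 1 + x)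
    (h : (1 + k) * y ≤ z + k * C * ((1 + c * k) ^ (n + 1))⁻¹ * G) :
    (1 + x) ^ (n + 1) * y ≤ (1 + x) / (1 + k) * ((1 + x) ^ n * z)
      + k * C / (1 + k) * ((1 + x) / (1 + c * k)) ^ (n + 1) * G := by
  have hk' : 0 < 1 + k := by linarith
  calc (1 + x) ^ (n + 1) * y = (1 + x) ^ (n + 1) / (1 + k) * ((1 + k) * y) := by
        field_simp
    _ ≤ (1 + x) ^ (n + 1) / (1 + k) * (z + k * C * ((1 + c * k) ^ (n + 1))⁻¹ * G) := by
        gcongr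
    _ = _ := by rw [div_pow]; field_simp; ring

theorem one_add_pow_mul_le_of_one_le {k c C : ℝ} {b g : ℕ → ℝ} (hk : 0 < k) (hc : 1 ≤ c)
    (hC : 0 ≤ C) (hg : ∀ n, 0 ≤ g n)
    (hrec : ∀ n : ℕ,
      (1 + k) * b (n + 1) ≤ b n + k * C * ((1 + c * k) ^ (n + 1))⁻¹ * (1 + g (n + 1)))
    (n : ℕ) :
    (1 + k) ^ n * b n ≤ b 0 + k * C / (1 + k) * ∑ m ∈ Icc 1 n, ((1 + k) / (1 + c * k)) ^ m
      + ∑ m ∈ Icc 1 n, k * C / (1 + k) * g m := by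
  have hk' : 0 < 1 + k := by linarith
  have hck : 0 < 1 + c * k := by nlinarith
  have hq₀ : 0 ≤ (1 + k) / (1 + c * k) := by positivity
  have hq₁ : (1 + k) / (1 + c * k) ≤ 1 := by rw [div_le_one hck]; nlinarith
  have hunrolled := le_add_sum_of_le_mul_add (a := fun n ↦ (1 + k) ^ n * b n) (e := 0) (K := b 0)
    (h := fun m ↦ k * C / (1 + k) * ((1 + k) / (1 + c * k)) ^ m * (1 + g m))
    zero_le_one le_rfl (fun m ↦ by have := hg m; positivity) (by simp) (by simp)
    (fun n ↦ by simpa [div_self hk'.ne'] using one_add_pow_succ_mul_le hk hk'.le (hrec n)) n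
  have hsplit : ∀ m ∈ Icc 1 n, k * C / (1 + k) * ((1 + k) / (1 + c * k)) ^ m * (1 + g m)
      ≤ k * C / (1 + k) * ((1 + k) / (1 + c * k)) ^ m + k * C / (1 + k) * g m := by
    intro m _
    have : k * C / (1 + k) * g m * ((1 + k) / (1 + c * k)) ^ m ≤ k * C / (1 + k) * g m :=
      mul_le_of_le_one_right (by have := hg m; positivity) (pow_le_one₀ hq₀ hq₁)
    linarith
  calc (1 + k) ^ n * b n ≤ b 0 + ∑ m ∈ Icc 1 n,
        k * C / (1 + k) * ((1 + k) / (1 + c * k)) ^ m * (1 + g m) := by simpa using hunrolled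
    _ ≤ _ := by
        rw [add_assoc, mul_sum, ← sum_add_distrib]
        gcongr with m hm
        exact hsplit m hm

theorem one_add_mul_pow_mul_le_of_lt_one {k c C : ℝ} {b g : ℕ → ℝ} (hk : 0 < k) (hc₀ : 0 < c)
    (hc₁ : c < 1) (hC : 0 ≤ C) (hb : 0 ≤ b 0) (hg : ∀ n, 0 ≤ g n)
    (hrec : ∀ n : ℕ,
      (1 + k) * b (n + 1) ≤ b n + k * C * ((1 + c * k) ^ (n + 1))⁻¹ * (1 + g (n + 1)))
    (n : ℕ) :
    (1 + c * k) ^ n * b n ≤ b 0 + C / (1 - c) + ∑ m ∈ Icc 1 n, k * C / (1 + k) * g m := by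
  have hk' : 0 < 1 + k := by linarith
  have hck : 0 < 1 + c * k := by positivity
  have hr₀ : 0 ≤ (1 + c * k) / (1 + k) := by positivity
  have hr₁ : (1 + c * k) / (1 + k) ≤ 1 := by rw [div_le_one hk']; nlinarith
  have habsorb : (1 - (1 + c * k) / (1 + k)) * (C / (1 - c)) = k * C / (1 + k) := by
    have : 1 - c ≠ 0 := by linarith
    field_simp; ring
  have hb' : 0 ≤ (1 - (1 + c * k) / (1 + k)) * b 0 := mul_nonneg (by linarith) hb
  refine le_add_sum_of_le_mul_add (a := fun n ↦ (1 + c * k) ^ n * b n) (e := k * C / (1 + k))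
    hr₀ hr₁ (fun m ↦ by have := hg m; positivity) (by simp; positivity) (by linarith) (fun n ↦ ?_) n
  have := one_add_pow_succ_mul_le hk hck.le (hrec n)
  rw [div_self hck.ne', one_pow, mul_one] at this
  linarith

theorem sum_Icc_mul_le_mul {k C S : ℝ} {g : ℕ → ℝ} (hk : 0 < k) (hC : 0 ≤ C) (hS : 0 ≤ S)
    (hsum : ∀ n : ℕ, 1 ≤ n → k * ∑ m ∈ Icc 1 n, g m ≤ S) (n : ℕ) :
    ∑ m ∈ Icc 1 n, k * C / (1 + k) * g m ≤ C * S := by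
  rcases Nat.eq_zero_or_pos n with rfl | hn
  · simpa using mul_nonneg hC hS
  calc ∑ m ∈ Icc 1 n, k * C / (1 + k) * g m = C / (1 + k) * (k * ∑ m ∈ Icc 1 n, g m) := by
        rw [mul_sum, mul_sum]; congr 1 with m; ring
    _ ≤ C / (1 + k) * S := by gcongr; exact hsum n hn
    _ ≤ C * S := by gcongr; exact div_le_self hC (by linarith)

theorem mul_sum_Icc_pow_le {k c C : ℝ} (hk : 0 < k) (hc : 1 < c) (hC : 0 ≤ C) (n : ℕ) :
    k * C / (1 + k) * ∑ m ∈ Icc 1 n, ((1 + k) / (1 + c * k)) ^ m ≤ C / (c - 1) := by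
  have hck : 0 < 1 + c * k := by positivity
  have hq₁ : (1 + k) / (1 + c * k) < 1 := by rw [div_lt_one hck]; nlinarith
  calc k * C / (1 + k) * ∑ m ∈ Icc 1 n, ((1 + k) / (1 + c * k)) ^ m
      ≤ k * C / (1 + k) * (((1 + k) / (1 + c * k)) ^ 1 / (1 - (1 + k) / (1 + c * k))) := by
        rw [← Ico_add_one_right_eq_Icc]
        gcongr
        exact geom_sum_Ico_le_of_lt_one (by positivity) hq₁
    _ = C / (c - 1) := by
        have : c - 1 ≠ 0 := by linarith
        have : 1 - (1 + k) / (1 + c * k) = (c - 1) * k / (1 + c * k) := by field_simp; ring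
        rw [this]; field_simp

/-- Exponential-decay form of the Corollary to Theorem 3.7 (and Theorem 4.9):
three-case exponential decay of `b(n)`. -/
theorem stmt_11 (k c C S : ℝ) (hk : 0 < k) (hc : 0 < c) (hC : 0 ≤ C) (hS : 0 ≤ S)
    (b g : ℕ → ℝ)
    (hbnn : ∀ n : ℕ, 0 ≤ b n) (hgnn : ∀ n : ℕ, 0 ≤ g n)
    (hrec : ∀ n : ℕ, 1 ≤ n →
      (1 + k) * b n ≤ b (n - 1) + k * C * ((1 + c * k) ^ n)⁻¹ * (1 + g n))
    (hsum : ∀ n : ℕ, 1 ≤ n → k * ∑ m ∈ Finset.Icc 1 n, g m ≤ S) :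
    ∀ n : ℕ,
      (1 < c → b n ≤ (b 0 + C / (c - 1) + C * S) * Real.exp (-(k * n) / (1 + k))) ∧
      (c = 1 → b n ≤ (b 0 + C * k * n + C * S) * Real.exp (-(k * n) / (1 + k))) ∧
      (c < 1 → b n ≤ (b 0 + C / (1 - c) + C * S) * Real.exp (-(c * k * n) / (1 + c * k))) := by
  intro n
  have hrec' (n : ℕ) :
      (1 + k) * b (n + 1) ≤ b n + k * C * ((1 + c * k) ^ (n + 1))⁻¹ * (1 + g (n + 1)) := by
    simpa using hrec (n + 1) n.succ_pos
  have hG := sum_Icc_mul_le_mul hk hC hS hsum n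
  refine ⟨fun hc₁ ↦ ?_, fun hc₁ ↦ ?_, fun hc₁ ↦ ?_⟩
  · have := one_add_pow_mul_le_of_one_le hk hc₁.le hC hgnn hrec' n
    have := mul_sum_Icc_pow_le hk hc₁ hC n
    exact le_mul_exp_of_one_add_pow_mul_le (by linarith) (hbnn n) (by linarith)
  · subst hc₁
    have := one_add_pow_mul_le_of_one_le hk le_rfl hC hgnn hrec' n
    have hq : (1 + k) / (1 + 1 * k) = 1 := by rw [one_mul, div_self (by positivity)]
    have hβ : k * C / (1 + k) * n ≤ C * k * n := by
      rw [mul_comm C k]; gcongr; exact div_le_self (by positivity) (by linarith)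
    simp only [hq, one_pow, sum_const, Nat.card_Icc, add_tsub_cancel_right, nsmul_eq_mul,
      mul_one] at this
    exact le_mul_exp_of_one_add_pow_mul_le (by linarith) (hbnn n) (by linarith)
  · have := one_add_mul_pow_mul_le_of_lt_one hk hc hc₁ hC (hbnn 0) hgnn hrec' n
    exact le_mul_exp_of_one_add_pow_mul_le (by nlinarith) (hbnn n) (by linarith)
end

section
/- Let ε ∈ (0, e^{−2}) and let F_ε : ℝ → ℝ be the regularized entropy function defined by F_ε(s) = s²/(2ε) + (log ε − 1)·s + 1 − ε/2 for s ≤ ε; F_ε(s) = s·log s − s + 1 for ε ≤ s ≤ 1/ε; and F_ε(s) = (ε/2)·s² − (1 + log ε)·s + 1 − 1/(2ε) for s ≥ 1/ε. Then F_ε(s) ≥ (ε/2)·s² − 2 for all s ≥ 0. -/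
/-- The regularized entropy function `F_ε`, obtained by integrating
`F_ε'' = 1/λ_ε` twice with `F_ε'(1) = F_ε(1) = 0`. -/
noncomputable def Feps (ε : ℝ) (s : ℝ) : ℝ :=
  if s ≤ ε then s ^ 2 / (2 * ε) + (Real.log ε - 1) * s + 1 - ε / 2
  else if s ≤ 1 / ε then s * Real.log s - s + 1
  else (ε / 2) * s ^ 2 - (1 + Real.log ε) * s + 1 - 1 / (2 * ε)

/-- `1 - 1/t ≤ log t` for `t > 0`. -/
lemma one_sub_inv_le_log (t : ℝ) (ht : 0 < t) : 1 - 1 / t ≤ Real.log t := by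
  have h := Real.log_le_sub_one_of_pos (x := 1 / t) (by positivity)
  rw [one_div, Real.log_inv] at h
  rw [one_div]
  linarith

/-- First inequality of (PNa): for `ε ∈ (0, e^{−2})`,
`F_ε(s) ≥ (ε/2)·s² − 2` for all `s ≥ 0`. -/
theorem stmt_13 (ε : ℝ) (hε0 : 0 < ε) (hε1 : ε < Real.exp (-2)) :
    ∀ s : ℝ, 0 ≤ s → (ε / 2) * s ^ 2 - 2 ≤ Feps ε s := by
  intro s hs
  have hεlt1 : ε < 1 := lt_trans hε1 (by
    have := Real.exp_lt_one_iff.mpr (by norm_num : (-2:ℝ) < 0); linarith)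
  have hlogε : Real.log ε < -2 := by
    have := Real.log_lt_log hε0 hε1
    rwa [Real.log_exp] at this
  unfold Feps
  split_ifs with h1 h2
  · -- s ≤ ε
    have hεlog : ε - 1 ≤ ε * Real.log ε := by
      have h := one_sub_inv_le_log ε hε0
      have : ε * (1 - 1/ε) ≤ ε * Real.log ε :=
        mul_le_mul_of_nonneg_left h (le_of_lt hε0)
      have hne : ε ≠ 0 := ne_of_gt hε0
      field_simp at this
      nlinarith
    have hq : ε / 2 * s ^ 2 ≤ s ^ 2 / (2 * ε) := by
      rw [le_div_iff₀ (by positivity : (0:ℝ) < 2 * ε)]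
      nlinarith [mul_nonneg (sq_nonneg s) (by nlinarith : (0:ℝ) ≤ 1 - ε ^ 2)]
    nlinarith [mul_nonneg (sub_nonneg.mpr h1) (neg_nonneg.mpr (le_of_lt (lt_trans hlogε (by norm_num))))]
  · -- ε < s ≤ 1/ε
    have hspos : 0 < s := lt_trans hε0 (lt_of_not_ge h1)
    have hεs : ε * s ≤ 1 := by
      have := (le_div_iff₀ hε0).mp h2
      linarith [mul_comm s ε]
    have hq : ε / 2 * s ^ 2 ≤ s / 2 := by nlinarith
    -- log s ≥ 3/2 - √e / s
    have he : Real.exp (1/2 : ℝ) < 3 := by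
      nlinarith [Real.exp_one_lt_d9, Real.exp_pos (1/2:ℝ),
        (by rw [← Real.exp_add]; norm_num : Real.exp (1/2:ℝ) * Real.exp (1/2:ℝ) = Real.exp 1)]
    have hkey : 3/2 - Real.exp (1/2:ℝ) / s ≤ Real.log s := by
      have ht : 0 < s * Real.exp (-(1/2):ℝ) := by positivity
      have h := one_sub_inv_le_log _ ht
      rw [Real.log_mul (ne_of_gt hspos) (ne_of_gt (Real.exp_pos _)), Real.log_exp] at h
      have hinv : 1 / (s * Real.exp (-(1/2):ℝ)) = Real.exp (1/2:ℝ) / s := by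
        rw [one_div, mul_inv, Real.exp_neg]
        field_simp
      rw [hinv] at h
      linarith
    have hslog : 3/2 * s - Real.exp (1/2:ℝ) ≤ s * Real.log s := by
      have := mul_le_mul_of_nonneg_left hkey (le_of_lt hspos)
      have hd : s * (Real.exp (1/2:ℝ) / s) = Real.exp (1/2:ℝ) := by
        field_simp
      nlinarith
    nlinarith
  · -- s > 1/ε
    have hs1 : 1 / ε < s := lt_of_not_ge h2
    have hεs : 1 < ε * s := by
      have := (div_lt_iff₀ hε0).mp hs1
      linarith [mul_comm s ε]
    have hc : -(1 + Real.log ε) ≥ 1 := by linarith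
    have hhalf : 1 / (2 * ε) = (1/ε) / 2 := by ring
    nlinarith [mul_le_mul_of_nonneg_left (le_of_lt hs1) (by linarith : (0:ℝ) ≤ -(1 + Real.log ε)), one_div_pos.mpr hε0]
end
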